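/- arXiv:2402.15926 — 3 statements merged into one kernel-verified Lean document; each statement's English description precedes it below -/
import Mathlib

section
/- (Acceleration with stepsize Θ(T).) Under the same setup, given a budget T ≥ 120·max{e, n}/γ² of GD steps with w₀ = 0 and stepsize η = γ²T/120, the final loss satisfies L(w_T) ≤ 480 ln²(γ⁴T²)/(γ⁴T²). -/
open Finset

/-- The average logistic loss L(w) = (1/n) Σᵢ ln(1 + exp(−⟨xᵢ, w⟩)). -/
noncomputable def logisticRisk {d n : ℕ} (x : Fin n → EuclideanSpace ℝ (Fin d))
    (w : EuclideanSpace ℝ (Fin d)) : ℝ :=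
  (1 / n) * ∑ i, Real.log (1 + Real.exp (-(inner ℝ (x i) w : ℝ)))

/-- The gradient ∇L(w) = (1/n) Σᵢ ℓ′(⟨xᵢ,w⟩) xᵢ with ℓ′(s) = −1/(1+eˢ). -/
noncomputable def logisticGrad {d n : ℕ} (x : Fin n → EuclideanSpace ℝ (Fin d))
    (w : EuclideanSpace ℝ (Fin d)) : EuclideanSpace ℝ (Fin d) :=
  (n : ℝ)⁻¹ • ∑ i, (-(1 + Real.exp ((inner ℝ (x i) w : ℝ)))⁻¹) • x i

/-- The gradient potential G(w) = (1/n) Σᵢ 1/(1 + exp(⟨xᵢ, w⟩)). -/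
noncomputable def gradPotential {d n : ℕ} (x : Fin n → EuclideanSpace ℝ (Fin d))
    (w : EuclideanSpace ℝ (Fin d)) : ℝ :=
  (1 / n) * ∑ i, (1 + Real.exp ((inner ℝ (x i) w : ℝ)))⁻¹

/-- The exponential potential F(w) = (1/n) Σᵢ exp(−⟨xᵢ, w⟩). -/
noncomputable def expPotential {d n : ℕ} (x : Fin n → EuclideanSpace ℝ (Fin d))
    (w : EuclideanSpace ℝ (Fin d)) : ℝ :=
  (1 / n) * ∑ i, Real.exp (-(inner ℝ (x i) w : ℝ))


lemma opexp (s : ℝ) : (0:ℝ) < 1 + Real.exp s := by positivity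

lemma g_nonneg (s : ℝ) : 0 ≤ (1 + Real.exp s)⁻¹ := by positivity

lemma g_le_one (s : ℝ) : (1 + Real.exp s)⁻¹ ≤ 1 := by
  have h := Real.exp_pos s
  rw [inv_le_one₀ (opexp s)]; linarith

lemma ell_nonneg (s : ℝ) : 0 ≤ Real.log (1 + Real.exp (-s)) :=
  Real.log_nonneg (by linarith [Real.exp_pos (-s)])

-- key algebraic identities
lemma one_sub_g (a : ℝ) : (1 + Real.exp (-a)) * (1 - (1 + Real.exp a)⁻¹) = 1 := by
  have ha := (opexp a).ne'
  have he : Real.exp (-a) * Real.exp a = 1 := by rw [← Real.exp_add]; simp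
  field_simp
  nlinarith [he]

lemma mul_g (a : ℝ) : (1 + Real.exp (-a)) * (1 + Real.exp a)⁻¹ = Real.exp (-a) := by
  have ha := (opexp a).ne'
  have he : Real.exp (-a) * Real.exp a = 1 := by rw [← Real.exp_add]; simp
  field_simp
  nlinarith [he]

lemma g_id (s : ℝ) : Real.exp (-s) * (1 - (1 + Real.exp s)⁻¹) = (1 + Real.exp s)⁻¹ := by
  have h1 := one_sub_g s
  have h2 := mul_g s
  nlinarith [h1, h2]

lemma g_le_ell (s : ℝ) : (1 + Real.exp s)⁻¹ ≤ Real.log (1 + Real.exp (-s)) := by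
  have h1 : 1 - (1 + Real.exp (-s))⁻¹ ≤ Real.log (1 + Real.exp (-s)) :=
    Real.one_sub_inv_le_log_of_pos (opexp (-s))
  have h2 : (1 + Real.exp s)⁻¹ = 1 - (1 + Real.exp (-s))⁻¹ := by
    have hb := (opexp (-s)).ne'
    have h3 := mul_g s
    have he : Real.exp (-s) * Real.exp s = 1 := by rw [← Real.exp_add]; simp
    field_simp
    nlinarith [h3, he]
  linarith [h2 ▸ h1]

lemma ell_le_exp (s : ℝ) : Real.log (1 + Real.exp (-s)) ≤ Real.exp (-s) := by
  have := Real.log_le_sub_one_of_pos (opexp (-s))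
  linarith

lemma g_le_exp (s : ℝ) : (1 + Real.exp s)⁻¹ ≤ Real.exp (-s) := by
  have h := g_id s
  nlinarith [g_nonneg s, g_le_one s, Real.exp_pos (-s)]

lemma exp_le_ell_mul (s : ℝ) :
    Real.exp (-s) ≤ Real.log (1 + Real.exp (-s)) * Real.exp (Real.log (1 + Real.exp (-s))) := by
  set l := Real.log (1 + Real.exp (-s)) with hl
  have h1 : Real.exp l = 1 + Real.exp (-s) := Real.exp_log (opexp (-s))
  have h2 : 1 - l ≤ Real.exp (-l) := by linarith [Real.add_one_le_exp (-l)]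
  have h3 : (1 - l) * Real.exp l ≤ 1 := by
    have := mul_le_mul_of_nonneg_right h2 (Real.exp_pos l).le
    rw [← Real.exp_add] at this; simpa using this
  nlinarith [Real.exp_pos l]

lemma conv_tangent (a b : ℝ) :
    Real.log (1 + Real.exp (-a)) - (1 + Real.exp a)⁻¹ * (b - a)
      ≤ Real.log (1 + Real.exp (-b)) := by
  set g := (1 + Real.exp a)⁻¹ with hg
  have hg0 : 0 ≤ g := g_nonneg a
  have hg1 : g ≤ 1 := g_le_one a
  have hconv := convexOn_exp.2 (Set.mem_univ (0:ℝ)) (Set.mem_univ (-(b-a)))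
    (by linarith : (0:ℝ) ≤ 1 - g) hg0 (by ring)
  simp only [smul_eq_mul, mul_zero, zero_add, Real.exp_zero, mul_one] at hconv
  have hprod : (1 + Real.exp (-a)) * ((1-g) + g * Real.exp (-(b-a))) = 1 + Real.exp (-b) := by
    have h1 := one_sub_g a
    have h2 := mul_g a
    have h3 : Real.exp (-a) * Real.exp (-(b-a)) = Real.exp (-b) := by
      rw [← Real.exp_add]; ring_nf
    calc (1 + Real.exp (-a)) * ((1-g) + g * Real.exp (-(b-a)))
        = (1 + Real.exp (-a)) * (1-g) + ((1 + Real.exp (-a)) * g) * Real.exp (-(b-a)) := by ring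
      _ = 1 + Real.exp (-a) * Real.exp (-(b-a)) := by rw [h1, h2]
      _ = 1 + Real.exp (-b) := by rw [h3]
  have key : (1 + Real.exp (-a)) * Real.exp (g * -(b - a)) ≤ 1 + Real.exp (-b) := by
    calc (1 + Real.exp (-a)) * Real.exp (g * -(b - a))
        ≤ (1 + Real.exp (-a)) * ((1-g) + g * Real.exp (-(b-a))) :=
          mul_le_mul_of_nonneg_left hconv (opexp (-a)).le
      _ = 1 + Real.exp (-b) := hprod
  have hlog := Real.log_le_log (by positivity) key
  rw [Real.log_mul (opexp (-a)).ne' (Real.exp_pos _).ne', Real.log_exp] at hlog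
  nlinarith [hlog]

lemma exp_quad {δ : ℝ} (h : |δ| ≤ 1) : Real.exp (-δ) - 1 + δ ≤ δ ^ 2 := by
  have h' : |(-δ)| ≤ 1 := by rwa [abs_neg]
  have hb := Real.exp_bound h' (by norm_num : 0 < 2)
  have e1 : ∑ i ∈ Finset.range 2, (-δ) ^ i / (i.factorial : ℝ) = 1 + -δ := by
    simp [Finset.sum_range_succ]
  rw [e1, abs_neg, sq_abs] at hb
  norm_num [Nat.factorial] at hb
  have := (abs_le.mp hb).2
  nlinarith [sq_nonneg δ]

lemma smooth_tangent (a b : ℝ) (h : |b - a| ≤ 1) :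
    Real.log (1 + Real.exp (-b))
      ≤ Real.log (1 + Real.exp (-a)) - (1 + Real.exp a)⁻¹ * (b - a)
        + Real.exp (-a) * (b - a) ^ 2 := by
  have hea := Real.exp_pos (-a)
  have hub : Real.log (1 + Real.exp (-b)) - Real.log (1 + Real.exp (-a))
      ≤ (Real.exp (-b) - Real.exp (-a)) / (1 + Real.exp (-a)) := by
    rw [← Real.log_div (opexp (-b)).ne' (opexp (-a)).ne']
    have hd := Real.log_le_sub_one_of_pos (div_pos (opexp (-b)) (opexp (-a)))
    have he : (1 + Real.exp (-b)) / (1 + Real.exp (-a)) - 1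
        = (Real.exp (-b) - Real.exp (-a)) / (1 + Real.exp (-a)) := by
      field_simp
      ring
    linarith [he ▸ hd]
  have heb : Real.exp (-b) = Real.exp (-a) * Real.exp (-(b-a)) := by
    rw [← Real.exp_add]; ring_nf
  have hgeq : (1 + Real.exp a)⁻¹ * (1 + Real.exp (-a)) = Real.exp (-a) := by
    linarith [mul_g a]
  have hquad := exp_quad h
  have hqnn : 0 ≤ Real.exp (-(b-a)) - 1 + (b-a) := by
    linarith [Real.add_one_le_exp (-(b-a))]
  -- key: (exp(-b) - exp(-a))/(1+exp(-a)) + g*(b-a) ≤ exp(-a)*(b-a)^2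
  have key : (Real.exp (-b) - Real.exp (-a)) / (1 + Real.exp (-a))
      + (1 + Real.exp a)⁻¹ * (b - a) ≤ Real.exp (-a) * (b - a) ^ 2 := by
    have hA := opexp (-a)
    have hgdiv : (1 + Real.exp a)⁻¹ = Real.exp (-a) / (1 + Real.exp (-a)) := by
      rw [eq_div_iff hA.ne']; exact hgeq
    have h1 : (Real.exp (-b) - Real.exp (-a)) / (1 + Real.exp (-a))
        + (1 + Real.exp a)⁻¹ * (b - a)
        = (Real.exp (-a) * (Real.exp (-(b-a)) - 1 + (b-a))) / (1 + Real.exp (-a)) := by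
      rw [hgdiv, heb, div_mul_eq_mul_div, ← add_div]
      congr 1; ring
    rw [h1]
    have hnum : 0 ≤ Real.exp (-a) * (Real.exp (-(b-a)) - 1 + (b-a)) := by positivity
    have h3 : (Real.exp (-a) * (Real.exp (-(b-a)) - 1 + (b-a))) / (1 + Real.exp (-a))
        ≤ Real.exp (-a) * (Real.exp (-(b-a)) - 1 + (b-a)) := by
      apply div_le_self hnum
      linarith [Real.exp_pos (-a)]
    have h4 : Real.exp (-a) * (Real.exp (-(b-a)) - 1 + (b-a)) ≤ Real.exp (-a) * (b-a)^2 :=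
      mul_le_mul_of_nonneg_left hquad hea.le
    linarith
  linarith [hub, key]
section Vec
variable {d n : ℕ} (x : Fin n → EuclideanSpace ℝ (Fin d))

lemma grad_inner (w v : EuclideanSpace ℝ (Fin d)) :
    (inner ℝ (logisticGrad x w) v : ℝ)
      = (1 / n) * ∑ i, (-(1 + Real.exp ((inner ℝ (x i) w : ℝ)))⁻¹) * (inner ℝ (x i) v : ℝ) := by
  unfold logisticGrad
  rw [real_inner_smul_left, sum_inner]
  simp_rw [real_inner_smul_left]
  rw [one_div]

lemma risk_nonneg (w : EuclideanSpace ℝ (Fin d)) : 0 ≤ logisticRisk x w := by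
  unfold logisticRisk
  have : 0 ≤ ∑ i, Real.log (1 + Real.exp (-(inner ℝ (x i) w : ℝ))) :=
    Finset.sum_nonneg fun i _ => ell_nonneg _
  positivity

lemma gradPot_nonneg (w : EuclideanSpace ℝ (Fin d)) : 0 ≤ gradPotential x w := by
  unfold gradPotential
  have : 0 ≤ ∑ i, (1 + Real.exp ((inner ℝ (x i) w : ℝ)))⁻¹ :=
    Finset.sum_nonneg fun i _ => g_nonneg _
  positivity

lemma expPot_nonneg (w : EuclideanSpace ℝ (Fin d)) : 0 ≤ expPotential x w := by
  unfold expPotential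
  have : 0 ≤ ∑ i, Real.exp (-(inner ℝ (x i) w : ℝ)) :=
    Finset.sum_nonneg fun i _ => (Real.exp_pos _).le
  positivity

lemma avg_le_avg {f g : Fin n → ℝ} (h : ∀ i, f i ≤ g i) :
    (1 / n : ℝ) * ∑ i, f i ≤ (1 / n : ℝ) * ∑ i, g i := by
  apply mul_le_mul_of_nonneg_left (Finset.sum_le_sum fun i _ => h i)
  positivity


lemma avg_le_mul_avg {c : ℝ} {f g : Fin n → ℝ} (h : ∀ i, f i ≤ c * g i) :
    (1 / n : ℝ) * ∑ i, f i ≤ c * ((1 / n : ℝ) * ∑ i, g i) := by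
  calc (1 / n : ℝ) * ∑ i, f i ≤ (1 / n : ℝ) * ∑ i, (c * g i) := avg_le_avg h
    _ = c * ((1 / n : ℝ) * ∑ i, g i) := by rw [← Finset.mul_sum]; ring

lemma gradPot_le_one (hn : 0 < n) (w : EuclideanSpace ℝ (Fin d)) : gradPotential x w ≤ 1 := by
  unfold gradPotential
  have h := avg_le_avg (n := n) (f := fun i => (1 + Real.exp ((inner ℝ (x i) w : ℝ)))⁻¹)
    (g := fun _ => 1) (fun i => g_le_one _)
  simp only [Finset.sum_const, Finset.card_univ, Fintype.card_fin, nsmul_eq_mul, mul_one] at h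
  have hn' : (0:ℝ) < n := Nat.cast_pos.mpr hn
  calc (1 / n : ℝ) * ∑ i, (1 + Real.exp ((inner ℝ (x i) w : ℝ)))⁻¹ ≤ (1/n) * n := h
    _ = 1 := by field_simp

lemma gradPot_le_risk (w : EuclideanSpace ℝ (Fin d)) :
    gradPotential x w ≤ logisticRisk x w :=
  avg_le_avg fun i => g_le_ell _

lemma risk_le_expPot (w : EuclideanSpace ℝ (Fin d)) :
    logisticRisk x w ≤ expPotential x w :=
  avg_le_avg fun i => ell_le_exp _

lemma grad_norm_le (hx : ∀ i, ‖x i‖ ≤ 1) (w : EuclideanSpace ℝ (Fin d)) :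
    ‖logisticGrad x w‖ ≤ gradPotential x w := by
  unfold logisticGrad gradPotential
  calc ‖(n : ℝ)⁻¹ • ∑ i, (-(1 + Real.exp ((inner ℝ (x i) w : ℝ)))⁻¹) • x i‖
      = (n:ℝ)⁻¹ * ‖∑ i, (-(1 + Real.exp ((inner ℝ (x i) w : ℝ)))⁻¹) • x i‖ := by
        rw [norm_smul, Real.norm_eq_abs, abs_of_nonneg (by positivity)]
    _ ≤ (n:ℝ)⁻¹ * ∑ i, ‖(-(1 + Real.exp ((inner ℝ (x i) w : ℝ)))⁻¹) • x i‖ := by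
        apply mul_le_mul_of_nonneg_left (norm_sum_le _ _) (by positivity)
    _ ≤ (n:ℝ)⁻¹ * ∑ i, (1 + Real.exp ((inner ℝ (x i) w : ℝ)))⁻¹ := by
        apply mul_le_mul_of_nonneg_left ?_ (by positivity)
        apply Finset.sum_le_sum
        intro i _
        rw [norm_smul, Real.norm_eq_abs, abs_neg, abs_of_nonneg (g_nonneg _)]
        calc (1 + Real.exp ((inner ℝ (x i) w : ℝ)))⁻¹ * ‖x i‖
            ≤ (1 + Real.exp ((inner ℝ (x i) w : ℝ)))⁻¹ * 1 :=
              mul_le_mul_of_nonneg_left (hx i) (g_nonneg _)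
          _ = _ := mul_one _
    _ = (1/n : ℝ) * ∑ i, (1 + Real.exp ((inner ℝ (x i) w : ℝ)))⁻¹ := by rw [one_div]

lemma risk_convexity (w u : EuclideanSpace ℝ (Fin d)) :
    logisticRisk x w + (inner ℝ (logisticGrad x w) (u - w) : ℝ) ≤ logisticRisk x u := by
  rw [grad_inner]
  unfold logisticRisk
  rw [← mul_add]
  rw [← Finset.sum_add_distrib]
  apply avg_le_avg
  intro i
  have h := conv_tangent ((inner ℝ (x i) w : ℝ)) ((inner ℝ (x i) u : ℝ))
  have hsub : (inner ℝ (x i) (u - w) : ℝ) = (inner ℝ (x i) u : ℝ) - (inner ℝ (x i) w : ℝ) :=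
    inner_sub_right _ _ _
  rw [hsub]
  linarith [h]

lemma risk_smooth (hx : ∀ i, ‖x i‖ ≤ 1) (w v : EuclideanSpace ℝ (Fin d)) (hv : ‖v‖ ≤ 1) :
    logisticRisk x (w + v)
      ≤ logisticRisk x w + (inner ℝ (logisticGrad x w) v : ℝ) + expPotential x w * ‖v‖ ^ 2 := by
  rw [grad_inner]
  unfold logisticRisk expPotential
  have key : ∀ i : Fin n,
      Real.log (1 + Real.exp (-(inner ℝ (x i) (w + v) : ℝ)))
        ≤ Real.log (1 + Real.exp (-(inner ℝ (x i) w : ℝ)))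
          + (-(1 + Real.exp ((inner ℝ (x i) w : ℝ)))⁻¹) * (inner ℝ (x i) v : ℝ)
          + Real.exp (-(inner ℝ (x i) w : ℝ)) * ‖v‖ ^ 2 := by
    intro i
    have hip : (inner ℝ (x i) (w + v) : ℝ) = (inner ℝ (x i) w : ℝ) + (inner ℝ (x i) v : ℝ) :=
      inner_add_right _ _ _
    have habs : |(inner ℝ (x i) v : ℝ)| ≤ ‖v‖ := by
      calc |(inner ℝ (x i) v : ℝ)| ≤ ‖x i‖ * ‖v‖ := abs_real_inner_le_norm _ _
        _ ≤ 1 * ‖v‖ := mul_le_mul_of_nonneg_right (hx i) (norm_nonneg _)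
        _ = ‖v‖ := one_mul _
    have h := smooth_tangent ((inner ℝ (x i) w : ℝ)) ((inner ℝ (x i) (w + v) : ℝ))
      (by rw [hip]; simpa using habs.trans hv)
    rw [hip] at h
    simp only [add_sub_cancel_left] at h
    have hsq : ((inner ℝ (x i) v : ℝ)) ^ 2 ≤ ‖v‖ ^ 2 := by
      rw [← sq_abs]
      exact pow_le_pow_left₀ (abs_nonneg _) habs 2
    have hmul := mul_le_mul_of_nonneg_left hsq (Real.exp_pos (-(inner ℝ (x i) w : ℝ))).le
    rw [hip]
    calc Real.log (1 + Real.exp (-((inner ℝ (x i) w : ℝ) + (inner ℝ (x i) v : ℝ)))) ≤ _ := h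
      _ ≤ Real.log (1 + Real.exp (-(inner ℝ (x i) w : ℝ)))
          + -(1 + Real.exp ((inner ℝ (x i) w : ℝ)))⁻¹ * (inner ℝ (x i) v : ℝ)
          + Real.exp (-(inner ℝ (x i) w : ℝ)) * ‖v‖^2 := by linarith
      _ = _ := by ring
  calc (1/(n:ℝ)) * ∑ i, Real.log (1 + Real.exp (-(inner ℝ (x i) (w + v) : ℝ)))
      ≤ (1/(n:ℝ)) * ∑ i, (Real.log (1 + Real.exp (-(inner ℝ (x i) w : ℝ)))
          + (-(1 + Real.exp ((inner ℝ (x i) w : ℝ)))⁻¹) * (inner ℝ (x i) v : ℝ)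
          + Real.exp (-(inner ℝ (x i) w : ℝ)) * ‖v‖ ^ 2) := avg_le_avg fun i => key i
    _ = _ := by
        rw [Finset.sum_add_distrib, Finset.sum_add_distrib, ← Finset.sum_mul]
        ring

lemma grad_inner_wstar (γ : ℝ) (wstar : EuclideanSpace ℝ (Fin d))
    (hmargin : ∀ i, γ ≤ (inner ℝ (x i) wstar : ℝ)) (w : EuclideanSpace ℝ (Fin d)) :
    (inner ℝ (logisticGrad x w) wstar : ℝ) ≤ -γ * gradPotential x w := by
  rw [grad_inner]
  unfold gradPotential
  apply avg_le_mul_avg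
  intro i
  have hg := g_nonneg ((inner ℝ (x i) w : ℝ))
  have hm := hmargin i
  nlinarith [hg, hm]

lemma risk_zero (hn : 0 < n) : logisticRisk x 0 = Real.log 2 := by
  unfold logisticRisk
  have h0 : ∀ i : Fin n, Real.log (1 + Real.exp (-(inner ℝ (x i) (0:EuclideanSpace ℝ (Fin d)) : ℝ)))
      = Real.log 2 := by
    intro i
    rw [inner_zero_right]
    norm_num
  rw [Finset.sum_congr rfl fun i _ => h0 i]
  simp only [Finset.sum_const, Finset.card_univ, Fintype.card_fin, nsmul_eq_mul]
  have hn' : ((n:ℝ)) ≠ 0 := Nat.cast_ne_zero.mpr hn.ne'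
  field_simp

lemma risk_comparator (γ ρ : ℝ) (hρ : 0 ≤ ρ) (wstar : EuclideanSpace ℝ (Fin d))
    (hmargin : ∀ i, γ ≤ (inner ℝ (x i) wstar : ℝ)) (w : EuclideanSpace ℝ (Fin d)) :
    logisticRisk x (w + ρ • wstar) ≤ Real.exp (-(γ * ρ)) * expPotential x w := by
  unfold logisticRisk expPotential
  apply avg_le_mul_avg
  intro i
  have hip : (inner ℝ (x i) (w + ρ • wstar) : ℝ)
      = (inner ℝ (x i) w : ℝ) + ρ * (inner ℝ (x i) wstar : ℝ) := by
    rw [inner_add_right, real_inner_smul_right]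
  rw [hip]
  calc Real.log (1 + Real.exp (-((inner ℝ (x i) w : ℝ) + ρ * (inner ℝ (x i) wstar : ℝ))))
      ≤ Real.exp (-((inner ℝ (x i) w : ℝ) + ρ * (inner ℝ (x i) wstar : ℝ))) := ell_le_exp _
    _ = Real.exp (-(ρ * (inner ℝ (x i) wstar : ℝ))) * Real.exp (-(inner ℝ (x i) w : ℝ)) := by
        rw [← Real.exp_add]; ring_nf
    _ ≤ Real.exp (-(γ * ρ)) * Real.exp (-(inner ℝ (x i) w : ℝ)) := by
        apply mul_le_mul_of_nonneg_right _ (Real.exp_pos _).le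
        apply Real.exp_le_exp.mpr
        have := mul_le_mul_of_nonneg_left (hmargin i) hρ
        nlinarith [this]

lemma single_le_avg_mul (hn : 0 < n) (f : Fin n → ℝ) (hf : ∀ j, 0 ≤ f j) (i : Fin n) :
    f i ≤ (n:ℝ) * ((1/n) * ∑ j, f j) := by
  have hn' : ((n:ℝ)) ≠ 0 := Nat.cast_ne_zero.mpr hn.ne'
  have h1 : (n:ℝ) * ((1/n) * ∑ j, f j) = ∑ j, f j := by field_simp
  rw [h1]
  exact Finset.single_le_sum (fun j _ => hf j) (Finset.mem_univ i)

lemma expPot_le_risk_mul (hn : 0 < n) (w : EuclideanSpace ℝ (Fin d)) :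
    expPotential x w ≤ Real.exp ((n:ℝ) * logisticRisk x w) * logisticRisk x w := by
  have key : ∀ i : Fin n, Real.exp (-(inner ℝ (x i) w : ℝ))
      ≤ Real.exp ((n:ℝ) * logisticRisk x w) * Real.log (1 + Real.exp (-(inner ℝ (x i) w : ℝ))) := by
    intro i
    have h1 := exp_le_ell_mul ((inner ℝ (x i) w : ℝ))
    have h2 : Real.log (1 + Real.exp (-(inner ℝ (x i) w : ℝ))) ≤ (n:ℝ) * logisticRisk x w := by
      unfold logisticRisk
      exact single_le_avg_mul hn
        (fun j => Real.log (1 + Real.exp (-(inner ℝ (x j) w : ℝ)))) (fun j => ell_nonneg _) i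
    have h3 : Real.exp (Real.log (1 + Real.exp (-(inner ℝ (x i) w : ℝ))))
        ≤ Real.exp ((n:ℝ) * logisticRisk x w) := Real.exp_le_exp.mpr h2
    have h4 := ell_nonneg ((inner ℝ (x i) w : ℝ))
    nlinarith [h1, h3, h4, Real.exp_pos (Real.log (1 + Real.exp (-(inner ℝ (x i) w : ℝ))))]
  have step := avg_le_avg (f := fun i => Real.exp (-(inner ℝ (x i) w : ℝ)))
    (g := fun i => Real.exp ((n:ℝ) * logisticRisk x w)
      * Real.log (1 + Real.exp (-(inner ℝ (x i) w : ℝ)))) key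
  rw [← Finset.mul_sum] at step
  calc expPotential x w
      = (1/(n:ℝ)) * ∑ i, Real.exp (-(inner ℝ (x i) w : ℝ)) := rfl
    _ ≤ (1/(n:ℝ)) * (Real.exp ((n:ℝ) * logisticRisk x w)
        * ∑ i, Real.log (1 + Real.exp (-(inner ℝ (x i) w : ℝ)))) := by simpa using step
    _ = Real.exp ((n:ℝ) * logisticRisk x w)
        * ((1/(n:ℝ)) * ∑ i, Real.log (1 + Real.exp (-(inner ℝ (x i) w : ℝ)))) := by ring
    _ = Real.exp ((n:ℝ) * logisticRisk x w) * logisticRisk x w := by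
        rw [show logisticRisk x w
          = (1/(n:ℝ)) * ∑ i, Real.log (1 + Real.exp (-(inner ℝ (x i) w : ℝ))) from rfl]

lemma expPot_le_gradPot (hn : 0 < n) (w : EuclideanSpace ℝ (Fin d))
    (h : (n:ℝ) * gradPotential x w ≤ 1/6) :
    expPotential x w ≤ (6/5) * gradPotential x w := by
  have key : ∀ i : Fin n, Real.exp (-(inner ℝ (x i) w : ℝ))
      ≤ (6/5) * (1 + Real.exp ((inner ℝ (x i) w : ℝ)))⁻¹ := by
    intro i
    have hgi : (1 + Real.exp ((inner ℝ (x i) w : ℝ)))⁻¹ ≤ 1/6 := by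
      have h5 := single_le_avg_mul hn
        (fun j => (1 + Real.exp ((inner ℝ (x j) w : ℝ)))⁻¹) (fun j => g_nonneg _) i
      have h6 : (n:ℝ) * ((1/n) * ∑ j, (1 + Real.exp ((inner ℝ (x j) w : ℝ)))⁻¹)
          = (n:ℝ) * gradPotential x w := rfl
      exact (h5.trans_eq h6).trans h
    have hid := g_id ((inner ℝ (x i) w : ℝ))
    have hepos := Real.exp_pos (-(inner ℝ (x i) w : ℝ))
    nlinarith [hid, hepos, g_nonneg ((inner ℝ (x i) w : ℝ))]
  have step := avg_le_avg (f := fun i => Real.exp (-(inner ℝ (x i) w : ℝ)))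
    (g := fun i => (6/5 : ℝ) * (1 + Real.exp ((inner ℝ (x i) w : ℝ)))⁻¹) key
  rw [← Finset.mul_sum] at step
  calc expPotential x w
      = (1/(n:ℝ)) * ∑ i, Real.exp (-(inner ℝ (x i) w : ℝ)) := rfl
    _ ≤ (1/(n:ℝ)) * ((6/5 : ℝ) * ∑ i, (1 + Real.exp ((inner ℝ (x i) w : ℝ)))⁻¹) := by
        simpa using step
    _ = (6/5 : ℝ) * ((1/(n:ℝ)) * ∑ i, (1 + Real.exp ((inner ℝ (x i) w : ℝ)))⁻¹) := by ring
    _ = (6/5 : ℝ) * gradPotential x w := by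
        rw [show gradPotential x w
          = (1/(n:ℝ)) * ∑ i, (1 + Real.exp ((inner ℝ (x i) w : ℝ)))⁻¹ from rfl]

end Vec

section Dyn
variable {d n : ℕ} (x : Fin n → EuclideanSpace ℝ (Fin d))

-- D1
lemma step_inner_wstar (γ η : ℝ) (hηnn : 0 ≤ η) (wstar : EuclideanSpace ℝ (Fin d))
    (hmargin : ∀ i, γ ≤ (inner ℝ (x i) wstar : ℝ)) (wt : EuclideanSpace ℝ (Fin d)) :
    (inner ℝ wt wstar : ℝ) + η * γ * gradPotential x wt
      ≤ (inner ℝ (wt - η • logisticGrad x wt) wstar : ℝ) := by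
  rw [inner_sub_left, real_inner_smul_left]
  have h := grad_inner_wstar x γ wstar hmargin wt
  nlinarith [mul_le_mul_of_nonneg_left h hηnn]

-- D2
lemma step_norm_sq (hn : 0 < n) (hx : ∀ i, ‖x i‖ ≤ 1) (η : ℝ) (hηnn : 0 ≤ η)
    (wt : EuclideanSpace ℝ (Fin d)) :
    ‖wt - η • logisticGrad x wt‖ ^ 2
      ≤ ‖wt‖ ^ 2 + 2 * η * Real.log 2 + η ^ 2 * gradPotential x wt := by
  rw [norm_sub_sq_real]
  have hconv := risk_convexity x wt 0
  rw [zero_sub, inner_neg_right] at hconv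
  -- hconv : L wt - ⟪grad, wt⟫ ≤ L 0
  have hL0 : logisticRisk x (0 : EuclideanSpace ℝ (Fin d)) = Real.log 2 := risk_zero x hn
  have hLpos := risk_nonneg x wt
  have hip : (inner ℝ wt (η • logisticGrad x wt) : ℝ) = η * (inner ℝ (logisticGrad x wt) wt : ℝ) := by
    rw [real_inner_smul_right, real_inner_comm]
  have hns : ‖η • logisticGrad x wt‖ ^ 2 = η ^ 2 * ‖logisticGrad x wt‖ ^ 2 := by
    rw [norm_smul, mul_pow, Real.norm_eq_abs, sq_abs]
  have hgn := grad_norm_le x hx wt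
  have hG1 := gradPot_le_one x hn wt
  have hGnn := gradPot_nonneg x wt
  have hgnn := norm_nonneg (logisticGrad x wt)
  have hsq : ‖logisticGrad x wt‖ ^ 2 ≤ gradPotential x wt := by nlinarith
  have hinner_lb : -(Real.log 2) ≤ (inner ℝ (logisticGrad x wt) wt : ℝ) := by
    rw [hL0] at hconv; linarith
  rw [hip, hns]
  nlinarith [mul_le_mul_of_nonneg_left hinner_lb hηnn, sq_nonneg η,
    mul_le_mul_of_nonneg_left hsq (sq_nonneg η)]

-- D3
lemma step_regret (η : ℝ) (hηnn : 0 ≤ η) (wt u : EuclideanSpace ℝ (Fin d)) :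
    ‖(wt - η • logisticGrad x wt) - u‖ ^ 2
      ≤ ‖wt - u‖ ^ 2 - 2 * η * (logisticRisk x wt - logisticRisk x u)
        + η ^ 2 * ‖logisticGrad x wt‖ ^ 2 := by
  have hrw : (wt - η • logisticGrad x wt) - u = (wt - u) - η • logisticGrad x wt := by
    abel
  rw [hrw, norm_sub_sq_real]
  have hconv := risk_convexity x wt u
  have hip : (inner ℝ (wt - u) (η • logisticGrad x wt) : ℝ)
      = η * (inner ℝ (logisticGrad x wt) (wt - u) : ℝ) := by
    rw [real_inner_smul_right, real_inner_comm]
  have hswap : (inner ℝ (logisticGrad x wt) (u - wt) : ℝ)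
      = -(inner ℝ (logisticGrad x wt) (wt - u) : ℝ) := by
    rw [← inner_neg_right]
    congr 1
    abel
  rw [hswap] at hconv
  have hns : ‖η • logisticGrad x wt‖ ^ 2 = η ^ 2 * ‖logisticGrad x wt‖ ^ 2 := by
    rw [norm_smul, mul_pow, Real.norm_eq_abs, sq_abs]
  rw [hip, hns]
  nlinarith [mul_le_mul_of_nonneg_left
    (show logisticRisk x wt - logisticRisk x u ≤ (inner ℝ (logisticGrad x wt) (wt - u) : ℝ) by
      linarith) hηnn]

-- D4
lemma step_descent (hn : 0 < n) (hx : ∀ i, ‖x i‖ ≤ 1) (η : ℝ) (hηnn : 0 ≤ η)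
    (wt : EuclideanSpace ℝ (Fin d))
    (hF : η * expPotential x wt ≤ 1/2) (hG : η * gradPotential x wt ≤ 1) :
    logisticRisk x (wt - η • logisticGrad x wt)
      ≤ logisticRisk x wt - (η/2) * ‖logisticGrad x wt‖ ^ 2 := by
  have hrw : wt - η • logisticGrad x wt = wt + (-(η • logisticGrad x wt)) := by abel
  have hgn := grad_norm_le x hx wt
  have hGnn := gradPot_nonneg x wt
  have hFnn := expPot_nonneg x wt
  have hgnn := norm_nonneg (logisticGrad x wt)
  have hvnorm : ‖-(η • logisticGrad x wt)‖ = η * ‖logisticGrad x wt‖ := by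
    rw [norm_neg, norm_smul, Real.norm_eq_abs, abs_of_nonneg hηnn]
  have hv1 : ‖-(η • logisticGrad x wt)‖ ≤ 1 := by
    rw [hvnorm]
    calc η * ‖logisticGrad x wt‖ ≤ η * gradPotential x wt :=
        mul_le_mul_of_nonneg_left hgn hηnn
      _ ≤ 1 := hG
  have hs := risk_smooth x hx wt (-(η • logisticGrad x wt)) hv1
  rw [← hrw] at hs
  have hipv : (inner ℝ (logisticGrad x wt) (-(η • logisticGrad x wt)) : ℝ)
      = -η * ‖logisticGrad x wt‖ ^ 2 := by
    rw [inner_neg_right, real_inner_smul_right, real_inner_self_eq_norm_sq]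
    ring
  rw [hipv, hvnorm] at hs
  -- hs : L(w+) ≤ L - η‖g‖² + F * (η‖g‖)²
  have hFb : expPotential x wt * (η * ‖logisticGrad x wt‖) ^ 2 ≤ (η/2) * ‖logisticGrad x wt‖^2 := by
    have h1 : expPotential x wt * (η * ‖logisticGrad x wt‖) ^ 2
        = (η * expPotential x wt) * (η * ‖logisticGrad x wt‖^2) := by ring
    rw [h1]
    have h2 : η * ‖logisticGrad x wt‖^2 ≥ 0 := by positivity
    calc (η * expPotential x wt) * (η * ‖logisticGrad x wt‖^2)
        ≤ (1/2) * (η * ‖logisticGrad x wt‖^2) := mul_le_mul_of_nonneg_right hF h2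
      _ = (η/2) * ‖logisticGrad x wt‖^2 := by ring
  linarith [hs, hFb]

end Dyn


-- Phase 1: within the first (T+1)/2 iterates there is s with 6·η·G(wₛ) ≤ 1.
set_option maxHeartbeats 1000000 in
lemma phase_one {d n : ℕ} (hn : 0 < n)
    (x : Fin n → EuclideanSpace ℝ (Fin d)) (hx : ∀ i, ‖x i‖ ≤ 1)
    (γ : ℝ) (hγ : 0 < γ) (hγ1 : γ ≤ 1) (wstar : EuclideanSpace ℝ (Fin d)) (hws : ‖wstar‖ = 1)
    (hmargin : ∀ i, γ ≤ (inner ℝ (x i) wstar : ℝ))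
    (T : ℕ) (hTge : 300 ≤ T)
    (η : ℝ) (hη0 : 0 < η) (hη1 : 1 ≤ η) (hγT : γ^2 * T = 120 * η)
    (w : ℕ → EuclideanSpace ℝ (Fin d)) (hw0 : w 0 = 0)
    (hgd : ∀ t, w (t + 1) = w t - η • logisticGrad x (w t)) :
    ∃ s : ℕ, 2*s + 1 ≤ T ∧ 6*η*gradPotential x (w s) ≤ 1 := by
  have hlog2 : Real.log 2 < 0.6931471808 := Real.log_two_lt_d9
  have hlog2' : (0:ℝ) < Real.log 2 := Real.log_pos one_lt_two
  have hγ2 : (0:ℝ) < γ^2 := by positivity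
  have hγ2le1 : γ^2 ≤ 1 := by nlinarith [hγ1, hγ.le]
  have hGnn : ∀ t, 0 ≤ gradPotential x (w t) := fun t => gradPot_nonneg x (w t)
  have h1 : ∀ m : ℕ, η * γ * (∑ t ∈ Finset.range m, gradPotential x (w t))
      ≤ (inner ℝ (w m) wstar : ℝ) := by
    intro m
    induction m with
    | zero => simp [hw0]
    | succ m ih =>
      rw [Finset.sum_range_succ, hgd m]
      have hst := step_inner_wstar x γ η hη0.le wstar hmargin (w m)
      have hexp : η * γ * ((∑ t ∈ Finset.range m, gradPotential x (w t)) + gradPotential x (w m))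
          = η * γ * (∑ t ∈ Finset.range m, gradPotential x (w t))
            + η * γ * gradPotential x (w m) := by ring
      rw [hexp]
      linarith only [ih, hst]
  have h2 : ∀ m : ℕ, ‖w m‖^2 ≤ 2*η*Real.log 2*m
      + η^2 * (∑ t ∈ Finset.range m, gradPotential x (w t)) := by
    intro m
    induction m with
    | zero => simp [hw0]
    | succ m ih =>
      rw [Finset.sum_range_succ, hgd m]
      have hst := step_norm_sq x hn hx η hη0.le (w m)
      push_cast
      linarith only [ih, hst]
  set m : ℕ := (T+1)/2 with hmdef
  have hmT : T ≤ 2*m ∧ 2*m ≤ T+1 := by omega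
  have hm1 : 1 ≤ m := by omega
  set S := ∑ t ∈ Finset.range m, gradPotential x (w t) with hSdef
  have hSnn : 0 ≤ S := Finset.sum_nonneg fun t _ => hGnn t
  have hCS : (inner ℝ (w m) wstar : ℝ) ≤ ‖w m‖ := by
    have := real_inner_le_norm (w m) wstar
    rw [hws, mul_one] at this
    exact this
  have hsq1 : (η*γ*S)^2 ≤ ‖w m‖^2 := by
    have h0 : 0 ≤ η*γ*S := by positivity
    have hms := mul_self_le_mul_self h0 ((h1 m).trans hCS)
    nlinarith only [hms]
  have hkey : η^2*γ^2*S^2 ≤ 2*η*Real.log 2*m + η^2*S := by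
    linarith only [hsq1, h2 m]
  have hmR : 2*(m:ℝ) ≤ (T:ℝ)+1 := by exact_mod_cast hmT.2
  have hmR2 : (T:ℝ) ≤ 2*(m:ℝ) := by exact_mod_cast hmT.1
  have hu : γ^2*S ≤ 10 := by
    have hc : 2*γ^2*Real.log 2*(m:ℝ) ≤ 85*η := by
      have h3 : γ^2*(2*(m:ℝ)) ≤ γ^2*((T:ℝ)+1) :=
        mul_le_mul_of_nonneg_left (by linarith only [hmR]) hγ2.le
      have h4 : γ^2*((T:ℝ)+1) = 120*η + γ^2 := by rw [← hγT]; ring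
      have h30 : 2*γ^2*(m:ℝ) ≤ 120*η + 1 := by linarith only [h3, h4, hγ2le1]
      have h31 := mul_le_mul_of_nonneg_left h30 hlog2'.le
      have h32 : Real.log 2*(120*η+1) ≤ 0.6931471808*(120*η+1) :=
        mul_le_mul_of_nonneg_right hlog2.le (by linarith only [hη0])
      linarith only [h31, h32, hη1]
    have h5 : η^2*(γ^2*S)^2 ≤ 85*η*η + η^2*(γ^2*S) := by
      have h41 := mul_le_mul_of_nonneg_left hkey hγ2.le
      have h42 := mul_le_mul_of_nonneg_left hc hη0.le
      nlinarith only [h41, h42]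
    by_contra hcon
    push_neg at hcon
    have hupos : (0:ℝ) < γ^2*S := by linarith only [hcon]
    have h11 : 10*(γ^2*S) < (γ^2*S)^2 := by nlinarith only [hcon, hupos]
    have hp1 := mul_lt_mul_of_pos_left h11 (mul_pos hη0 hη0)
    have hp2 := mul_lt_mul_of_pos_left hcon (mul_pos hη0 hη0)
    nlinarith only [h5, hp1, hp2, mul_pos hη0 hη0]
  have hpig : ∃ s ∈ Finset.range m, gradPotential x (w s) ≤ S/m := by
    apply Finset.exists_le_of_sum_le ⟨0, Finset.mem_range.mpr hm1⟩
    rw [Finset.sum_const, Finset.card_range, nsmul_eq_mul]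
    have hm0 : (0:ℝ) < (m:ℝ) := by exact_mod_cast hm1
    rw [mul_div_cancel₀ _ hm0.ne']
  obtain ⟨s, hsmem, hGs⟩ := hpig
  have hsm : s < m := Finset.mem_range.mp hsmem
  have hm0 : (0:ℝ) < (m:ℝ) := by exact_mod_cast hm1
  refine ⟨s, by omega, ?_⟩
  have hγm : 60*η ≤ γ^2*(m:ℝ) := by
    have hh := mul_le_mul_of_nonneg_left hmR2 hγ2.le
    rw [hγT] at hh
    linarith only [hh]
  have hmulG := mul_le_mul_of_nonneg_right hγm (hGnn s)
  have h7 : γ^2*(m:ℝ)*gradPotential x (w s) ≤ γ^2*S := by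
    have h7a := mul_le_mul_of_nonneg_left hGs (le_of_lt (mul_pos hγ2 hm0))
    have h7b : γ^2*(m:ℝ)*(S/(m:ℝ)) = γ^2*S := by field_simp
    calc γ^2*(m:ℝ)*gradPotential x (w s) ≤ γ^2*(m:ℝ)*(S/(m:ℝ)) := h7a
      _ = γ^2*S := h7b
  linarith only [hmulG, h7, hu]

-- One stable descent step.
set_option maxHeartbeats 1000000 in
lemma stable_step {d n : ℕ} (hn : 0 < n)
    (x : Fin n → EuclideanSpace ℝ (Fin d)) (hx : ∀ i, ‖x i‖ ≤ 1)
    (η : ℝ) (hη0 : 0 < η) (hηn : (n:ℝ) ≤ η)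
    (wt : EuclideanSpace ℝ (Fin d)) (hLt : 5*η*logisticRisk x wt ≤ 1) :
    logisticRisk x (wt - η • logisticGrad x wt)
      ≤ logisticRisk x wt - (η/2) * ‖logisticGrad x wt‖^2 := by
  have hLnn := risk_nonneg x wt
  have hηL : η*logisticRisk x wt ≤ 1/5 := by linarith only [hLt]
  have hnL : (n:ℝ)*logisticRisk x wt ≤ 1/5 := by
    have := mul_le_mul_of_nonneg_right hηn hLnn
    linarith only [this, hηL]
  have hnL0 : 0 ≤ (n:ℝ)*logisticRisk x wt := by positivity
  have hexp5 : Real.exp ((n:ℝ)*logisticRisk x wt) ≤ 5/4 := by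
    have hb := Real.exp_bound_div_one_sub_of_interval hnL0
      (by linarith only [hnL] : (n:ℝ)*logisticRisk x wt < 1)
    have h2 : 1/(1-(n:ℝ)*logisticRisk x wt) ≤ 5/4 := by
      rw [div_le_div_iff₀ (by linarith only [hnL]) (by norm_num)]
      linarith only [hnL]
    linarith only [hb, h2]
  have hFb : η*expPotential x wt ≤ 1/2 := by
    have hF := expPot_le_risk_mul x hn wt
    have h8 : expPotential x wt ≤ (5/4)*logisticRisk x wt := by
      have := mul_le_mul_of_nonneg_right hexp5 hLnn
      linarith only [hF, this]
    have h9 := mul_le_mul_of_nonneg_left h8 hη0.le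
    linarith only [h9, hηL]
  have hGb : η*gradPotential x wt ≤ 1 := by
    have := mul_le_mul_of_nonneg_left (gradPot_le_risk x wt) hη0.le
    linarith only [this, hηL]
  exact step_descent x hn hx η hη0.le wt hFb hGb

-- Final scalar arithmetic.
set_option maxHeartbeats 1000000 in
lemma final_arith (γ η N M X Ls Fs LT Lu ρ : ℝ)
    (hγ : 0 < γ) (hγ1 : γ ≤ 1) (hη1 : 1 ≤ η) (hη0 : 0 < η) (hNpos : 0 < N)
    (hMdef : M = γ^2*η*N) (hXpos : 0 < X)
    (hMX : X/240 ≤ M) (hMle : M ≤ X) (hMe : Real.exp 1 ≤ M)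
    (hρdef : ρ = Real.log M / γ)
    (hLu : Lu ≤ M⁻¹ * Fs) (hFs5 : 5*η*Fs ≤ 1) (hFsnn : 0 ≤ Fs)
    (hLs5 : 5*η*Ls ≤ 1) (hLsnn : 0 ≤ Ls) (hLT0 : 0 ≤ LT)
    (hmain : 2*η*N*(LT - Lu) ≤ ρ^2 + 2*η*Ls) :
    LT ≤ 480 * (Real.log X)^2 / X := by
  have hex : (2.7182818283 : ℝ) < Real.exp 1 := Real.exp_one_gt_d9
  have hMpos : 0 < M := lt_of_lt_of_le (by linarith only [hex]) hMe
  have hγ2 : (0:ℝ) < γ^2 := by positivity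
  have hγ2le1 : γ^2 ≤ 1 := by nlinarith only [hγ1, hγ.le]
  have hlogM : 1 ≤ Real.log M := by
    rw [← Real.log_exp 1]
    exact Real.log_le_log (Real.exp_pos 1) hMe
  have hγρ : γ*ρ = Real.log M := by rw [hρdef]; field_simp
  have hγρ2 : γ^2*ρ^2 = (Real.log M)^2 := by
    have h0 : (γ*ρ)^2 = (Real.log M)^2 := by rw [hγρ]
    nlinarith only [h0]
  have hMLu : M * Lu ≤ Fs := by
    have h11 := mul_le_mul_of_nonneg_left hLu hMpos.le
    calc M * Lu ≤ M * (M⁻¹ * Fs) := h11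
      _ = Fs := by field_simp
  have h12 : M*(LT - Lu) ≤ (Real.log M)^2/2 + γ^2*η*Ls := by
    have h13 := mul_le_mul_of_nonneg_left hmain (by positivity : (0:ℝ) ≤ γ^2/2)
    have hrw1 : γ^2/2*(2*η*N*(LT - Lu)) = M*(LT - Lu) := by rw [hMdef]; ring
    have hrw2 : γ^2/2*(ρ^2 + 2*η*Ls) = γ^2*ρ^2/2 + γ^2*η*Ls := by ring
    rw [hrw1, hrw2] at h13
    linarith only [h13, hγρ2]
  have hFs' : Fs ≤ 1/5 := by
    have := mul_le_mul_of_nonneg_right hη1 hFsnn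
    linarith only [this, hFs5]
  have hηLs : η*Ls ≤ 1/5 := by linarith only [hLs5]
  have hLs' : γ^2*η*Ls ≤ 1/5 := by
    have h14 : 0 ≤ η*Ls := by positivity
    have := mul_le_mul_of_nonneg_right hγ2le1 h14
    have h15 : 0 ≤ (1 - γ^2)*(η*Ls) := by nlinarith only [hγ2le1, h14]
    nlinarith only [h15, hηLs]
  have hsqM : 1 ≤ (Real.log M)^2 := by nlinarith only [hlogM]
  have hMP : M * LT ≤ (Real.log M)^2 := by
    nlinarith only [h12, hMLu, hFs', hLs', hsqM]
  have hLTM : LT ≤ (Real.log M)^2 / M := by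
    rw [le_div_iff₀ hMpos]
    linarith only [hMP]
  have hlogX : Real.log M ≤ Real.log X := Real.log_le_log hMpos hMle
  have hlogM0 : (0:ℝ) ≤ Real.log M := by linarith only [hlogM]
  have hsqlog : (Real.log M)^2 ≤ (Real.log X)^2 := by
    have := mul_le_mul hlogX hlogX hlogM0 (le_trans hlogM0 hlogX)
    nlinarith only [this]
  have hinv : (Real.log M)^2 / M ≤ 240*(Real.log X)^2/X := by
    rw [div_le_div_iff₀ hMpos hXpos]
    have h13 : X ≤ 240*M := by linarith only [hMX]
    have p1 := mul_le_mul_of_nonneg_left h13 (sq_nonneg (Real.log M))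
    have p2 := mul_le_mul_of_nonneg_right hsqlog (by positivity : (0:ℝ) ≤ 240*M)
    nlinarith only [p1, p2]
  have hfinal : 240*(Real.log X)^2/X ≤ 480*(Real.log X)^2/X := by
    have h19 : 0 ≤ (Real.log X)^2/X := by positivity
    have h20 : 240*(Real.log X)^2/X = 240*((Real.log X)^2/X) := by ring
    have h21 : 480*(Real.log X)^2/X = 480*((Real.log X)^2/X) := by ring
    rw [h20, h21]
    linarith only [h19]
  linarith only [hLTM, hinv, hfinal]

set_option maxHeartbeats 1000000 in
/-- acceleration with stepsize η = γ²T/120. -/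
theorem gd_acceleration {d n : ℕ} (hn : 0 < n)
    (x : Fin n → EuclideanSpace ℝ (Fin d)) (hx : ∀ i, ‖x i‖ ≤ 1)
    (γ : ℝ) (hγ : 0 < γ) (wstar : EuclideanSpace ℝ (Fin d)) (hws : ‖wstar‖ = 1)
    (hmargin : ∀ i, γ ≤ (inner ℝ (x i) wstar : ℝ))
    (T : ℕ) (hT : 120 * max (Real.exp 1) (n : ℝ) / γ ^ 2 ≤ (T : ℝ))
    (η : ℝ) (hη : η = γ ^ 2 * T / 120)
    (w : ℕ → EuclideanSpace ℝ (Fin d)) (hw0 : w 0 = 0)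
    (hgd : ∀ t, w (t + 1) = w t - η • logisticGrad x (w t)) :
    logisticRisk x (w T)
      ≤ 480 * (Real.log (γ ^ 4 * T ^ 2)) ^ 2 / (γ ^ 4 * T ^ 2) := by
  have hex : (2.7182818283 : ℝ) < Real.exp 1 := Real.exp_one_gt_d9
  have hγ2 : (0:ℝ) < γ^2 := by positivity
  have hγ1 : γ ≤ 1 := by
    have h := hmargin ⟨0, hn⟩
    have h2 : (inner ℝ (x ⟨0, hn⟩) wstar : ℝ) ≤ ‖x ⟨0, hn⟩‖ * ‖wstar‖ := real_inner_le_norm _ _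
    rw [hws, mul_one] at h2
    exact h.trans (h2.trans (hx _))
  have hγ2le1 : γ^2 ≤ 1 := by nlinarith only [hγ1, hγ.le]
  have hmax : 120 * max (Real.exp 1) (n:ℝ) ≤ γ^2 * T := by
    rw [div_le_iff₀ hγ2] at hT
    linarith only [hT]
  have hTe : 120 * Real.exp 1 ≤ γ^2 * T := by
    have := le_max_left (Real.exp 1) (n:ℝ)
    linarith only [this, hmax]
  have hTn : 120 * (n:ℝ) ≤ γ^2 * T := by
    have := le_max_right (Real.exp 1) (n:ℝ)
    linarith only [this, hmax]
  have hTnn : (0:ℝ) ≤ (T:ℝ) := Nat.cast_nonneg T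
  have hT300 : (300:ℝ) ≤ (T:ℝ) := by
    have h3 := mul_le_mul_of_nonneg_right hγ2le1 hTnn
    linarith only [h3, hTe, hex]
  have hη0 : 0 < η := by rw [hη]; linarith only [hTe, hex]
  have hηe : Real.exp 1 ≤ η := by rw [hη]; linarith only [hTe]
  have hηn : (n:ℝ) ≤ η := by rw [hη]; linarith only [hTn]
  have hη1 : (1:ℝ) ≤ η := le_trans (by linarith only [hex]) hηe
  have hγT : γ^2 * T = 120 * η := by rw [hη]; ring
  have hTge : 300 ≤ T := by exact_mod_cast hT300
  -- phase 1
  obtain ⟨s, hs2T, h6⟩ := phase_one hn x hx γ hγ hγ1 wstar hws hmargin T hTge η hη0 hη1 hγT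
    w hw0 hgd
  have hGnn := gradPot_nonneg x (w s)
  have hηG : η*gradPotential x (w s) ≤ 1/6 := by linarith only [h6]
  have hnG : (n:ℝ)*gradPotential x (w s) ≤ 1/6 := by
    have := mul_le_mul_of_nonneg_right hηn hGnn
    linarith only [this, hηG]
  have hFs : expPotential x (w s) ≤ (6/5)*gradPotential x (w s) :=
    expPot_le_gradPot x hn (w s) hnG
  have hFs5 : 5*η*expPotential x (w s) ≤ 1 := by
    have := mul_le_mul_of_nonneg_left hFs hη0.le
    linarith only [this, hηG]
  have hLs : 5*η*logisticRisk x (w s) ≤ 1 := by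
    have := mul_le_mul_of_nonneg_left (risk_le_expPot x (w s)) hη0.le
    linarith only [this, hFs5]
  -- phase 2 invariants
  have hInv : ∀ k, 5*η*logisticRisk x (w (s+k)) ≤ 1 := by
    intro k
    induction k with
    | zero => simpa using hLs
    | succ k ih =>
      have hd := stable_step hn x hx η hη0 hηn (w (s+k)) ih
      rw [← hgd (s+k)] at hd
      have hnrm : 0 ≤ (η/2) * ‖logisticGrad x (w (s+k))‖^2 := by positivity
      have hle : logisticRisk x (w ((s+k)+1)) ≤ logisticRisk x (w (s+k)) := by
        linarith only [hd, hnrm]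
      have h52 := mul_le_mul_of_nonneg_left hle (by positivity : (0:ℝ) ≤ 5*η)
      have heq : s+(k+1) = (s+k)+1 := rfl
      rw [heq]
      linarith only [h52, ih]
  have hmono2 : ∀ j k : ℕ, j ≤ k →
      logisticRisk x (w (s+k)) ≤ logisticRisk x (w (s+j)) := by
    intro j k hjk
    induction k, hjk using Nat.le_induction with
    | base => exact le_refl _
    | succ k hjk ih =>
      have hd := stable_step hn x hx η hη0 hηn (w (s+k)) (hInv k)
      rw [← hgd (s+k)] at hd
      have hnrm : 0 ≤ (η/2) * ‖logisticGrad x (w (s+k))‖^2 := by positivity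
      have heq : s+(k+1) = (s+k)+1 := rfl
      rw [heq]
      linarith only [hd, hnrm, ih]
  -- comparator setup
  set N : ℕ := T - s with hNdef
  have hsT : s < T := by omega
  have hsN : s + N = T := by omega
  have hNR : (N:ℝ) = (T:ℝ) - (s:ℝ) := by
    rw [hNdef]; push_cast [Nat.cast_sub hsT.le]; ring
  have hNhalf : (T:ℝ)/2 ≤ (N:ℝ) := by
    have h9 : ((2*s + 1 : ℕ):ℝ) ≤ ((T : ℕ):ℝ) := by exact_mod_cast hs2T
    push_cast at h9
    rw [hNR]; linarith only [h9]
  have hNpos : (0:ℝ) < (N:ℝ) := by linarith only [hNhalf, hT300]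
  set M := γ^2*η*(N:ℝ) with hMdef
  have hMpos : 0 < M := by positivity
  set X := γ^4*(T:ℝ)^2 with hXdef
  have hXpos : 0 < X := by
    have : (0:ℝ) < (T:ℝ) := by linarith only [hT300]
    positivity
  have hXe : (120*Real.exp 1)^2 ≤ X := by
    have hXsq : X = (γ^2*(T:ℝ))^2 := by rw [hXdef]; ring
    rw [hXsq]
    have h0 : (0:ℝ) ≤ 120*Real.exp 1 := by positivity
    exact pow_le_pow_left₀ h0 hTe 2
  have hMX : X/240 ≤ M := by
    have h14 : γ^2*η*((T:ℝ)/2) = X/240 := by rw [hη, hXdef]; ring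
    rw [← h14, hMdef]
    exact mul_le_mul_of_nonneg_left hNhalf (by positivity)
  have hMle : M ≤ X := by
    have hNT : (N:ℝ) ≤ (T:ℝ) := by rw [hNR]; linarith only [(Nat.cast_nonneg s : (0:ℝ) ≤ (s:ℝ))]
    have h15 : γ^2*η*(T:ℝ) = X/120 := by rw [hη, hXdef]; ring
    have h16 := mul_le_mul_of_nonneg_left hNT (show (0:ℝ) ≤ γ^2*η by positivity)
    rw [hMdef]
    nlinarith only [h15, h16, hXpos]
  have hMe : Real.exp 1 ≤ M := by
    have h17 : Real.exp 1 ≤ 60*(Real.exp 1)^2 := by nlinarith only [hex]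
    have h18 : (120*Real.exp 1)^2/240 = 60*(Real.exp 1)^2 := by ring
    linarith only [hMX, hXe, h17, h18]
  set ρ := Real.log M / γ with hρdef
  have hlogM : 1 ≤ Real.log M := by
    rw [← Real.log_exp 1]
    exact Real.log_le_log (Real.exp_pos 1) hMe
  have hρnn : 0 ≤ ρ := by
    apply div_nonneg (by linarith only [hlogM]) hγ.le
  set u := w s + ρ • wstar with hudef
  have hA0 : ‖w s - u‖^2 = ρ^2 := by
    have h16 : w s - u = -(ρ • wstar) := by rw [hudef]; abel
    rw [h16, norm_neg, norm_smul, hws, mul_one, Real.norm_eq_abs, sq_abs]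
  have hLu : logisticRisk x u ≤ M⁻¹ * expPotential x (w s) := by
    have h17 := risk_comparator x γ ρ hρnn wstar hmargin (w s)
    have hγρ : γ*ρ = Real.log M := by rw [hρdef]; field_simp
    rw [hγρ, Real.exp_neg, Real.exp_log hMpos] at h17
    exact h17
  -- telescoping
  have htel : ∀ k : ℕ, ‖w (s+k) - u‖^2
      + 2*η*(∑ j ∈ Finset.range k, (logisticRisk x (w (s+j)) - logisticRisk x u))
      ≤ ‖w s - u‖^2 + 2*η*(logisticRisk x (w s) - logisticRisk x (w (s+k))) := by
    intro k
    induction k with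
    | zero => simp
    | succ k ih =>
      have hreg := step_regret x η hη0.le (w (s+k)) u
      rw [← hgd (s+k)] at hreg
      have hdes := stable_step hn x hx η hη0 hηn (w (s+k)) (hInv k)
      rw [← hgd (s+k)] at hdes
      have hgsq : η^2 * ‖logisticGrad x (w (s+k))‖^2
          ≤ 2*η*(logisticRisk x (w (s+k)) - logisticRisk x (w ((s+k)+1))) := by
        have h20 : (η/2)*‖logisticGrad x (w (s+k))‖^2
            ≤ logisticRisk x (w (s+k)) - logisticRisk x (w ((s+k)+1)) := by
          linarith only [hdes]
        have h21 := mul_le_mul_of_nonneg_left h20 (by linarith only [hη0] : (0:ℝ) ≤ 2*η)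
        calc η^2 * ‖logisticGrad x (w (s+k))‖^2
            = 2*η*((η/2)*‖logisticGrad x (w (s+k))‖^2) := by ring
          _ ≤ 2*η*(logisticRisk x (w (s+k)) - logisticRisk x (w ((s+k)+1))) := h21
      rw [Finset.sum_range_succ]
      have heq : s+(k+1) = (s+k)+1 := rfl
      rw [heq]
      linarith only [ih, hreg, hgsq]
  have hfin := htel N
  have hsum : (N:ℝ)*(logisticRisk x (w T) - logisticRisk x u)
      ≤ ∑ j ∈ Finset.range N, (logisticRisk x (w (s+j)) - logisticRisk x u) := by
    have hptw : ∀ j ∈ Finset.range N,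
        logisticRisk x (w T) - logisticRisk x u
          ≤ logisticRisk x (w (s+j)) - logisticRisk x u := by
      intro j hj
      have hjN : j ≤ N := (Finset.mem_range.mp hj).le
      have h18 := hmono2 j N hjN
      rw [hsN] at h18
      linarith only [h18]
    calc (N:ℝ)*(logisticRisk x (w T) - logisticRisk x u)
        = ∑ _j ∈ Finset.range N, (logisticRisk x (w T) - logisticRisk x u) := by
          rw [Finset.sum_const, Finset.card_range, nsmul_eq_mul]
      _ ≤ _ := Finset.sum_le_sum hptw
  rw [hsN] at hfin
  have hLT0 := risk_nonneg x (w T)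
  have hmain : 2*η*(N:ℝ)*(logisticRisk x (w T) - logisticRisk x u)
      ≤ ρ^2 + 2*η*logisticRisk x (w s) := by
    have hsq0 : (0:ℝ) ≤ ‖w T - u‖^2 := sq_nonneg _
    have h22 := mul_le_mul_of_nonneg_left hsum (show (0:ℝ) ≤ 2*η by linarith only [hη0])
    have h23 : 0 ≤ 2*η*logisticRisk x (w T) := by positivity
    nlinarith only [h22, hfin, hA0, hsq0, h23]
  have hconc := final_arith γ η (N:ℝ) M X (logisticRisk x (w s)) (expPotential x (w s))
    (logisticRisk x (w T)) (logisticRisk x u) ρ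
    hγ hγ1 hη1 hη0 hNpos hMdef hXpos hMX hMle hMe hρdef hLu hFs5 (expPot_nonneg x (w s))
    hLs (risk_nonneg x (w s)) hLT0 hmain
  rw [hXdef] at hconc
  exact hconc
end

section
/- (Small stepsize necessary for initial descent.) Let w₀ = 0 and x̄ = (1/n) Σᵢ xᵢ. Suppose there exist r > 0 and q ∈ (0,1) such that the fraction of indices i with xᵢᵀx̄ < −r is at least q. Then if the first GD step does not increase the logistic loss, i.e., L(w₁) ≤ L(w₀), the stepsize satisfies η ≤ 2 ln(2)/(rq). -/
open Finset

/-- a small stepsize is necessary for the first GD step not to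
increase the loss. -/
theorem gd_small_stepsize_necessary {d n : ℕ} (hn : 0 < n)
    (x : Fin n → EuclideanSpace ℝ (Fin d))
    (η : ℝ) (hη : 0 < η) (r q : ℝ) (hr : 0 < r) (hq0 : 0 < q) (hq1 : q < 1)
    (hfrac : q ≤ (({i : Fin n |
        (inner ℝ (x i) ((n : ℝ)⁻¹ • ∑ j, x j) : ℝ) < -r} : Finset (Fin n)).card : ℝ) / n)
    (hdesc : logisticRisk x ((0 : EuclideanSpace ℝ (Fin d))
        - η • logisticGrad x 0) ≤ logisticRisk x 0) :
    η ≤ 2 * Real.log 2 / (r * q) := by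
  classical
  have hn' : (0:ℝ) < n := by exact_mod_cast hn
  set v : EuclideanSpace ℝ (Fin d) := (n : ℝ)⁻¹ • ∑ j, x j with hv
  set S : Finset (Fin n) := {i : Fin n | (inner ℝ (x i) v : ℝ) < -r} with hS
  -- compute the gradient at 0
  have hg : logisticGrad x 0 = (-(2:ℝ)⁻¹) • v := by
    rw [hv, logisticGrad]
    have : ∀ i : Fin n, (-(1 + Real.exp ((inner ℝ (x i) (0:EuclideanSpace ℝ (Fin d)) : ℝ)))⁻¹) • x i
        = (-(2:ℝ)⁻¹) • x i := by
      intro i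
      simp [inner_zero_right]
      norm_num
    rw [Finset.sum_congr rfl fun i _ => this i, ← Finset.smul_sum, smul_smul, smul_smul,
      mul_comm]
  have hw1 : (0 : EuclideanSpace ℝ (Fin d)) - η • logisticGrad x 0 = (η/2) • v := by
    rw [hg, smul_smul]
    rw [zero_sub, ← neg_smul]
    ring_nf
  -- loss at 0
  have h0 : logisticRisk x 0 = Real.log 2 := by
    rw [logisticRisk]
    have : ∀ i : Fin n, Real.log (1 + Real.exp (-(inner ℝ (x i) (0:EuclideanSpace ℝ (Fin d)) : ℝ)))
        = Real.log 2 := by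
      intro i; simp [inner_zero_right]; norm_num
    rw [Finset.sum_congr rfl fun i _ => this i, Finset.sum_const, Finset.card_univ,
      Fintype.card_fin, nsmul_eq_mul]
    field_simp
  -- lower bound on loss at w1
  have hcard : q * n ≤ (S.card : ℝ) := by
    rw [le_div_iff₀ hn'] at hfrac
    linarith
  have hterm_nonneg : ∀ i : Fin n,
      0 ≤ Real.log (1 + Real.exp (-(inner ℝ (x i) ((η/2) • v) : ℝ))) := by
    intro i
    apply Real.log_nonneg
    have := Real.exp_pos (-(inner ℝ (x i) ((η/2) • v) : ℝ))
    linarith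
  have hterm_S : ∀ i ∈ S, η * r / 2 ≤
      Real.log (1 + Real.exp (-(inner ℝ (x i) ((η/2) • v) : ℝ))) := by
    intro i hi
    rw [hS, Finset.mem_filter] at hi
    have hi' : (inner ℝ (x i) v : ℝ) < -r := hi.2
    have hip : (inner ℝ (x i) ((η/2) • v) : ℝ) = (η/2) * (inner ℝ (x i) v : ℝ) :=
      real_inner_smul_right _ _ _
    set t : ℝ := -(inner ℝ (x i) ((η/2) • v) : ℝ) with ht
    have h1 : η * r / 2 ≤ t := by
      rw [ht, hip]
      nlinarith
    have h2 : t ≤ Real.log (1 + Real.exp t) := by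
      calc t = Real.log (Real.exp t) := (Real.log_exp t).symm
        _ ≤ Real.log (1 + Real.exp t) := by
            apply Real.log_le_log (Real.exp_pos t)
            linarith
    exact h1.trans h2
  have hsum : (S.card : ℝ) * (η * r / 2) ≤
      ∑ i, Real.log (1 + Real.exp (-(inner ℝ (x i) ((η/2) • v) : ℝ))) := by
    calc (S.card : ℝ) * (η * r / 2)
        = ∑ _i ∈ S, (η * r / 2) := by rw [Finset.sum_const, nsmul_eq_mul]
      _ ≤ ∑ i ∈ S, Real.log (1 + Real.exp (-(inner ℝ (x i) ((η/2) • v) : ℝ))) :=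
          Finset.sum_le_sum hterm_S
      _ ≤ ∑ i, Real.log (1 + Real.exp (-(inner ℝ (x i) ((η/2) • v) : ℝ))) :=
          Finset.sum_le_sum_of_subset_of_nonneg (Finset.subset_univ S)
            (fun i _ _ => hterm_nonneg i)
  have hlb : q * (η * r / 2) ≤ logisticRisk x ((η/2) • v) := by
    rw [logisticRisk]
    have h1 : q * n * (η * r / 2) ≤ (S.card : ℝ) * (η * r / 2) := by
      apply mul_le_mul_of_nonneg_right hcard
      positivity
    have h2 : (1/(n:ℝ)) * (q * n * (η * r / 2)) ≤
        (1/(n:ℝ)) * ∑ i, Real.log (1 + Real.exp (-(inner ℝ (x i) ((η/2) • v) : ℝ))) := by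
      apply mul_le_mul_of_nonneg_left (le_trans h1 hsum)
      positivity
    calc q * (η * r / 2) = (1/(n:ℝ)) * (q * n * (η * r / 2)) := by field_simp
      _ ≤ _ := h2
  rw [hw1, h0] at hdesc
  have hkey : q * (η * r / 2) ≤ Real.log 2 := le_trans hlb hdesc
  rw [le_div_iff₀ (by positivity : (0:ℝ) < r * q)]
  nlinarith [hkey]
end

section
/- (SGD split regret bound, almost surely.) Consider online SGD w_{t+1} = w_t − η ∇L_t(w_t) with L_t(w) = ln(1+exp(−x_tᵀw)), where almost surely ‖x_t‖ ≤ 1 and ⟨x_t, w*⟩ ≥ γ for a fixed unit vector w*. For any u₁ ∈ ℝᵈ and u = u₁ + (η/(2γ))w*: ‖w_t − u‖²/(2ηt) + (1/t) Σ_{k=0}^{t−1} L_k(w_k) ≤ (1/t) Σ_{k=0}^{t−1} L_k(u₁) + ‖w₀ − u‖²/(2ηt), almost surely, for every t ≥ 1 and any η > 0. -/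
open Finset

lemma logistic_tangent (s z : ℝ) :
    Real.log (1 + Real.exp (-s)) - (z - s) * (1 + Real.exp s)⁻¹
      ≤ Real.log (1 + Real.exp (-z)) := by
  set a := Real.exp (-s) with ha_def
  set c := (1 + Real.exp s)⁻¹ with hc_def
  have ha : 0 < a := Real.exp_pos _
  have hes : Real.exp s * a = 1 := by rw [ha_def, ← Real.exp_add]; simp
  have hesp : 0 < Real.exp s := Real.exp_pos _
  have h1es : (0:ℝ) < 1 + Real.exp s := by linarith
  have hc0 : 0 < c := by positivity
  have hc1 : c ≤ 1 := by
    rw [hc_def]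
    exact inv_le_one_of_one_le₀ (by linarith)
  have hca : c * (1 + a) = a := by
    rw [hc_def]
    field_simp
    nlinarith
  have hcv := convexOn_exp.2 (Set.mem_univ (0:ℝ)) (Set.mem_univ (s - z))
    (by linarith : (0:ℝ) ≤ 1 - c) (le_of_lt hc0) (by ring)
  simp only [smul_eq_mul, mul_zero, zero_add, Real.exp_zero, mul_one] at hcv
  have haz : a * Real.exp (s - z) = Real.exp (-z) := by
    rw [ha_def, ← Real.exp_add]; ring_nf
  have key : (1 + a) * Real.exp (c * (s - z)) ≤ 1 + Real.exp (-z) := by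
    have := mul_le_mul_of_nonneg_left hcv (by linarith : (0:ℝ) ≤ 1 + a)
    calc (1 + a) * Real.exp (c * (s - z)) ≤ (1 + a) * ((1 - c) + c * Real.exp (s - z)) := this
      _ = (1 + a) - c * (1+a) + c * (1+a) * Real.exp (s - z) := by ring
      _ = 1 + a * Real.exp (s - z) := by rw [hca]; ring
      _ = 1 + Real.exp (-z) := by rw [haz]
  have hz : (0:ℝ) < 1 + Real.exp (-z) := by positivity
  have hl := Real.log_le_log (by positivity) key
  rw [Real.log_mul (by positivity) (Real.exp_ne_zero _), Real.log_exp] at hl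
  linarith

/-- pathwise split regret bound for online SGD on separable
logistic regression, with per-sample loss L_k(w) = ln(1 + exp(−⟨x_k, w⟩))
and update w_{k+1} = w_k − η ℓ′(⟨x_k, w_k⟩) x_k where ℓ′(s) = −1/(1+eˢ). -/
theorem sgd_split_regret_bound {d : ℕ}
    (x : ℕ → EuclideanSpace ℝ (Fin d)) (hx : ∀ k, ‖x k‖ ≤ 1)
    (γ : ℝ) (hγ : 0 < γ) (wstar : EuclideanSpace ℝ (Fin d)) (hws : ‖wstar‖ = 1)
    (hmargin : ∀ k, γ ≤ (inner ℝ (x k) wstar : ℝ))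
    (η : ℝ) (hη : 0 < η) (w : ℕ → EuclideanSpace ℝ (Fin d))
    (hsgd : ∀ k, w (k + 1)
      = w k - η • ((-(1 + Real.exp ((inner ℝ (x k) (w k) : ℝ)))⁻¹) • x k))
    (u₁ : EuclideanSpace ℝ (Fin d)) (t : ℕ) (ht : 1 ≤ t) :
    ‖w t - (u₁ + (η / (2 * γ)) • wstar)‖ ^ 2 / (2 * η * t)
        + (1 / t) * ∑ k ∈ Finset.range t,
            Real.log (1 + Real.exp (-(inner ℝ (x k) (w k) : ℝ)))
      ≤ (1 / t) * ∑ k ∈ Finset.range t,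
            Real.log (1 + Real.exp (-(inner ℝ (x k) u₁ : ℝ)))
        + ‖w 0 - (u₁ + (η / (2 * γ)) • wstar)‖ ^ 2 / (2 * η * t) := by
  set u : EuclideanSpace ℝ (Fin d) := u₁ + (η / (2 * γ)) • wstar with hu_def
  set L : ℕ → ℝ := fun k => Real.log (1 + Real.exp (-(inner ℝ (x k) (w k) : ℝ))) with hL_def
  set M : ℕ → ℝ := fun k => Real.log (1 + Real.exp (-(inner ℝ (x k) u₁ : ℝ))) with hM_def
  -- per-step inequality
  have step : ∀ k, ‖w (k+1) - u‖ ^ 2 + 2 * η * L k ≤ ‖w k - u‖ ^ 2 + 2 * η * M k := by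
    intro k
    set s : ℝ := (inner ℝ (x k) (w k) : ℝ) with hs_def
    set z : ℝ := (inner ℝ (x k) u₁ : ℝ) with hz_def
    set c : ℝ := (1 + Real.exp s)⁻¹ with hc_def
    have hc0 : 0 < c := by positivity
    have hc1 : c ≤ 1 := inv_le_one_of_one_le₀ (by linarith [Real.exp_pos s])
    have hupd : w (k+1) - u = (w k - u) + (η * c) • x k := by
      rw [hsgd k, neg_smul, smul_neg, smul_smul]
      abel
    have hnorm : ‖w (k+1) - u‖ ^ 2
        = ‖w k - u‖ ^ 2 + 2 * (inner ℝ (w k - u) ((η * c) • x k) : ℝ)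
          + ‖(η * c) • x k‖ ^ 2 := by
      rw [hupd, norm_add_sq_real]
    have hinner : (inner ℝ (w k - u) ((η * c) • x k) : ℝ)
        = η * c * (s - z - (η / (2 * γ)) * (inner ℝ (x k) wstar : ℝ)) := by
      rw [real_inner_smul_right, real_inner_comm]
      rw [hu_def, inner_sub_right, inner_add_right, real_inner_smul_right]
      ring
    have hnx : ‖(η * c) • x k‖ ^ 2 ≤ η ^ 2 * c ^ 2 := by
      rw [norm_smul]
      have h1 : ‖x k‖ ≤ 1 := hx k
      have h2 : (0:ℝ) ≤ ‖x k‖ := norm_nonneg _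
      have : ‖η * c‖ = η * c := abs_of_pos (by positivity)
      rw [mul_pow, this]
      nlinarith [mul_le_mul h1 h1 h2 zero_le_one, sq_nonneg (η*c)]
    have htan : L k - M k ≤ (z - s) * c := by
      have := logistic_tangent s z
      rw [hL_def, hM_def]
      simp only [← hs_def, ← hz_def, ← hc_def]
      linarith
    have hm : γ ≤ (inner ℝ (x k) wstar : ℝ) := hmargin k
    have hβm : η * c * ((η / (2 * γ)) * γ) ≤ η * c * ((η / (2 * γ)) * (inner ℝ (x k) wstar : ℝ)) := by
      apply mul_le_mul_of_nonneg_left _ (by positivity)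
      apply mul_le_mul_of_nonneg_left hm (by positivity)
    have hβγ : (η / (2 * γ)) * γ = η / 2 := by field_simp
    have hA : 2*η*(L k - M k) ≤ 2*η*((z - s)*c) :=
      mul_le_mul_of_nonneg_left htan (by positivity)
    have hB : η^2*c^2 ≤ η^2*c := by nlinarith [sq_nonneg η]
    have hC : η * c * (η / 2) ≤ η * c * ((η / (2 * γ)) * (inner ℝ (x k) wstar : ℝ)) := by
      rw [← hβγ]; exact hβm
    rw [hnorm, hinner]
    linarith [hnx, hA, hB, hC]
  -- telescoped inequality
  have main : ∀ n : ℕ, ‖w n - u‖ ^ 2 + 2 * η * ∑ k ∈ Finset.range n, L k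
      ≤ ‖w 0 - u‖ ^ 2 + 2 * η * ∑ k ∈ Finset.range n, M k := by
    intro n
    induction n with
    | zero => simp
    | succ n ih =>
      rw [Finset.sum_range_succ, Finset.sum_range_succ]
      have := step n
      nlinarith [this, ih]
  have ht0 : (0:ℝ) < t := by exact_mod_cast ht
  have h2ηt : (0:ℝ) < 2 * η * t := by positivity
  have hmt := main t
  have lhs_eq : ‖w t - u‖ ^ 2 / (2 * η * t) + (1 / t) * ∑ k ∈ Finset.range t, L k
      = (‖w t - u‖ ^ 2 + 2 * η * ∑ k ∈ Finset.range t, L k) / (2 * η * t) := by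
    field_simp
  have rhs_eq : (1 / t) * ∑ k ∈ Finset.range t, M k + ‖w 0 - u‖ ^ 2 / (2 * η * t)
      = (‖w 0 - u‖ ^ 2 + 2 * η * ∑ k ∈ Finset.range t, M k) / (2 * η * t) := by
    field_simp
    ring
  rw [lhs_eq, rhs_eq]
  gcongr
end
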